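/- Let θ̂ minimize L(θ) + λ‖θ‖₁ over ℝ^d, where L(θ) = ‖θ‖₂² − 2bᵀθ for a fixed b ∈ ℝ^d. Let θ₀ ∈ ℝ^d be supported on a set U ⊆ [d] of cardinality s, write β = θ̂ − θ₀, and suppose λ ≥ 2‖∇L(θ₀)‖∞. Then ‖β‖₂ ≤ (3/4)·λ·√s and ‖β‖₁ ≤ 3·λ·s. -/

import Mathlib

open scoped RealInnerProductSpace

set_option maxHeartbeats 1000000 in
/-- Lasso-type bound: if `θ̂` minimizes `L(θ) + λ‖θ‖₁` with `L(θ) = ‖θ‖₂² − 2bᵀθ`,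
`θ₀` is supported on `U` of cardinality `s`, and `λ ≥ 2‖∇L(θ₀)‖∞`, then for
`β = θ̂ − θ₀` we have `‖β‖₂ ≤ (3/4)·λ·√s` and `‖β‖₁ ≤ 3·λ·s`. -/
theorem lasso_quadratic_bound
    (d : ℕ) (b θhat θ0 : EuclideanSpace ℝ (Fin d)) (lam : ℝ)
    (U : Finset (Fin d)) (s : ℕ) (hs : U.card = s)
    (hsupp : ∀ i ∉ U, θ0 i = 0)
    (hmin : ∀ θ : EuclideanSpace ℝ (Fin d),
      (‖θhat‖ ^ 2 - 2 * ⟪b, θhat⟫) + lam * ∑ i, |θhat i|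
        ≤ (‖θ‖ ^ 2 - 2 * ⟪b, θ⟫) + lam * ∑ i, |θ i|)
    (hlam : 2 * (⨆ i, |2 * θ0 i - 2 * b i|) ≤ lam) :
    ‖θhat - θ0‖ ≤ 3 / 4 * lam * Real.sqrt s
      ∧ (∑ i, |θhat i - θ0 i|) ≤ 3 * lam * s := by
  set β : EuclideanSpace ℝ (Fin d) := θhat - θ0 with hβ
  have hβi : ∀ i, β i = θhat i - θ0 i := fun i => by simp [hβ]
  -- λ is nonnegative
  have hlam0 : 0 ≤ lam := by
    rcases isEmpty_or_nonempty (Fin d) with h | h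
    · simpa [Real.iSup_of_isEmpty] using hlam
    · refine le_trans ?_ hlam
      obtain ⟨i⟩ := h
      have h0 : (0:ℝ) ≤ |2 * θ0 i - 2 * b i| := abs_nonneg _
      have hle : |2 * θ0 i - 2 * b i| ≤ ⨆ j, |2 * θ0 j - 2 * b j| :=
        le_ciSup (f := fun j => |2 * θ0 j - 2 * b j|)
          (Set.Finite.bddAbove (Set.finite_range _)) i
      linarith
  -- sup bound on coordinates of the gradient at θ0
  have hgrad : ∀ i, |2 * θ0 i - 2 * b i| ≤ lam / 2 := by
    intro i
    have hle : |2 * θ0 i - 2 * b i| ≤ ⨆ j, |2 * θ0 j - 2 * b j| :=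
      le_ciSup (f := fun j => |2 * θ0 j - 2 * b j|)
        (Set.Finite.bddAbove (Set.finite_range _)) i
    linarith
  -- first-order optimality: key inequality obtained by testing θhat - t•β, t → 0
  have hkey : 2 * ⟪θhat - b, β⟫ + lam * (∑ i, |θhat i|) - lam * (∑ i, |θ0 i|) ≤ 0 := by
    have hstep : ∀ t : ℝ, 0 < t → t ≤ 1 →
        2 * ⟪θhat - b, β⟫ + lam * (∑ i, |θhat i|) - lam * (∑ i, |θ0 i|) ≤ t * ‖β‖ ^ 2 := by
      intro t ht0 ht1
      have h := hmin (θhat - t • β)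
      have hnorm : ‖θhat - t • β‖ ^ 2
          = ‖θhat‖ ^ 2 - 2 * t * ⟪θhat, β⟫ + t ^ 2 * ‖β‖ ^ 2 := by
        rw [norm_sub_sq_real, real_inner_smul_right, norm_smul, Real.norm_eq_abs,
          abs_of_pos ht0]
        ring
      have hinner : ⟪b, θhat - t • β⟫ = ⟪b, θhat⟫ - t * ⟪b, β⟫ := by
        rw [inner_sub_right, real_inner_smul_right]
      have habs : (∑ i, |(θhat - t • β) i|)
          ≤ (1 - t) * (∑ i, |θhat i|) + t * (∑ i, |θ0 i|) := by
        rw [Finset.mul_sum, Finset.mul_sum, ← Finset.sum_add_distrib]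
        refine Finset.sum_le_sum fun i _ => ?_
        have hrw : (θhat - t • β) i = (1 - t) * θhat i + t * θ0 i := by
          simp [hβi]; ring
        rw [hrw]
        calc |(1 - t) * θhat i + t * θ0 i|
            ≤ |(1 - t) * θhat i| + |t * θ0 i| := abs_add_le _ _
          _ = (1 - t) * |θhat i| + t * |θ0 i| := by
              rw [abs_mul, abs_mul, abs_of_nonneg (by linarith : (0:ℝ) ≤ 1 - t),
                abs_of_pos ht0]
      have hip : ⟪θhat - b, β⟫ = ⟪θhat, β⟫ - ⟪b, β⟫ := by rw [inner_sub_left]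
      have h2 := mul_le_mul_of_nonneg_left habs hlam0
      rw [hnorm, hinner] at h
      have h3 : t * (2 * ⟪θhat - b, β⟫ + lam * (∑ i, |θhat i|) - lam * (∑ i, |θ0 i|))
          ≤ t * (t * ‖β‖ ^ 2) := by
        rw [hip]; nlinarith [h, h2]
      have h4 := le_of_mul_le_mul_left h3 ht0
      linarith [h4]
    by_contra hcon
    push_neg at hcon
    set A := 2 * ⟪θhat - b, β⟫ + lam * (∑ i, |θhat i|) - lam * (∑ i, |θ0 i|) with hA
    have hB : (0:ℝ) ≤ ‖β‖ ^ 2 := sq_nonneg _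
    set t := min 1 (A / (2 * (‖β‖ ^ 2 + 1))) with htdef
    have ht0 : 0 < t := lt_min one_pos (by positivity)
    have ht1 : t ≤ 1 := min_le_left _ _
    have h := hstep t ht0 ht1
    have htA : t * ‖β‖ ^ 2 < A := by
      have h1 : t ≤ A / (2 * (‖β‖ ^ 2 + 1)) := min_le_right _ _
      have h2 : t * ‖β‖ ^ 2 ≤ A / (2 * (‖β‖ ^ 2 + 1)) * ‖β‖ ^ 2 :=
        mul_le_mul_of_nonneg_right h1 hB
      have h3 : A / (2 * (‖β‖ ^ 2 + 1)) * ‖β‖ ^ 2 < A := by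
        rw [div_mul_eq_mul_div, div_lt_iff₀ (by positivity)]
        nlinarith
      linarith
    linarith
  -- rewrite the inner product
  have hsplit : ⟪θhat - b, β⟫ = ⟪θ0 - b, β⟫ + ‖β‖ ^ 2 := by
    have hr : θhat - b = (θ0 - b) + β := by rw [hβ]; abel
    rw [hr, inner_add_left, real_inner_self_eq_norm_sq]
  -- bound the cross term
  have hinner_sum : ⟪θ0 - b, β⟫ = ∑ i, (θ0 i - b i) * β i := by
    simp [PiLp.inner_apply, RCLike.inner_apply, conj_trivial]; exact Finset.sum_congr rfl fun i _ => mul_comm _ _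
  have hcross : -(2 * ⟪θ0 - b, β⟫) ≤ (lam / 2) * ∑ i, |β i| := by
    rw [hinner_sum, Finset.mul_sum, Finset.mul_sum, ← Finset.sum_neg_distrib]
    refine Finset.sum_le_sum fun i _ => ?_
    have h1 : -(2 * ((θ0 i - b i) * β i)) ≤ |2 * θ0 i - 2 * b i| * |β i| := by
      calc -(2 * ((θ0 i - b i) * β i)) ≤ |2 * ((θ0 i - b i) * β i)| := neg_le_abs _
        _ = |2 * θ0 i - 2 * b i| * |β i| := by
            rw [show 2 * ((θ0 i - b i) * β i) = (2 * θ0 i - 2 * b i) * β i by ring,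
              abs_mul]
    have h2 := mul_le_mul_of_nonneg_right (hgrad i) (abs_nonneg (β i))
    linarith
  -- ℓ1 splitting
  set S1U := ∑ i ∈ U, |β i| with hS1U
  set S1c := ∑ i ∈ Uᶜ, |β i| with hS1c
  have hS1U0 : 0 ≤ S1U := Finset.sum_nonneg fun i _ => abs_nonneg _
  have hS1c0 : 0 ≤ S1c := Finset.sum_nonneg fun i _ => abs_nonneg _
  have hsum_split : (∑ i, |β i|) = S1U + S1c := (Finset.sum_add_sum_compl U _).symm
  have hl1 : (∑ i, |θ0 i|) - (∑ i, |θhat i|) ≤ S1U - S1c := by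
    rw [← Finset.sum_add_sum_compl U (fun i => |θ0 i|),
      ← Finset.sum_add_sum_compl U (fun i => |θhat i|)]
    have h1 : ∑ i ∈ U, |θ0 i| - ∑ i ∈ U, |θhat i| ≤ S1U := by
      rw [← Finset.sum_sub_distrib]
      refine Finset.sum_le_sum fun i _ => ?_
      have h := abs_sub_abs_le_abs_sub (θ0 i) (θhat i)
      have h2 : |θ0 i - θhat i| = |β i| := by rw [hβi, abs_sub_comm]
      linarith
    have h2 : ∑ i ∈ Uᶜ, |θ0 i| = 0 := by
      refine Finset.sum_eq_zero fun i hi => ?_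
      rw [hsupp i (Finset.mem_compl.mp hi), abs_zero]
    have h3 : ∑ i ∈ Uᶜ, |θhat i| = S1c := by
      refine Finset.sum_congr rfl fun i hi => ?_
      rw [hβi, hsupp i (Finset.mem_compl.mp hi), sub_zero]
    rw [h2, h3]
    linarith
  -- main inequality: 2‖β‖² ≤ (3/2)λ S1U − (λ/2) S1c
  have hmain : 2 * ‖β‖ ^ 2 ≤ (3 / 2) * lam * S1U - (lam / 2) * S1c := by
    rw [hsplit] at hkey
    have hl1' := mul_le_mul_of_nonneg_left hl1 hlam0
    rw [hsum_split] at hcross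
    nlinarith [hkey, hl1', hcross]
  -- Cauchy–Schwarz on U
  have hnormsq : ‖β‖ ^ 2 = ∑ i, β i ^ 2 := by
    rw [EuclideanSpace.norm_eq, Real.sq_sqrt (Finset.sum_nonneg fun i _ => sq_nonneg _)]
    simp [Real.norm_eq_abs, sq_abs]
  have hcs2 : S1U ^ 2 ≤ (s : ℝ) * ‖β‖ ^ 2 := by
    calc S1U ^ 2 ≤ U.card * ∑ i ∈ U, |β i| ^ 2 := sq_sum_le_card_mul_sum_sq
      _ ≤ (s : ℝ) * ‖β‖ ^ 2 := by
          rw [hs, hnormsq]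
          refine mul_le_mul_of_nonneg_left ?_ (Nat.cast_nonneg s)
          simp only [sq_abs]
          exact Finset.sum_le_sum_of_subset_of_nonneg (Finset.subset_univ U)
            (fun i _ _ => sq_nonneg _)
  have hCS : S1U ≤ Real.sqrt s * ‖β‖ := by
    have h := Real.sqrt_le_sqrt hcs2
    rwa [Real.sqrt_sq hS1U0, Real.sqrt_mul (Nat.cast_nonneg s), Real.sqrt_sq (norm_nonneg β)] at h
  have hsq : Real.sqrt s * Real.sqrt s = (s : ℝ) := Real.mul_self_sqrt (Nat.cast_nonneg s)
  have hsqrt0 : 0 ≤ Real.sqrt s := Real.sqrt_nonneg _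
  -- first conclusion
  have hb1 : ‖β‖ ≤ 3 / 4 * lam * Real.sqrt s := by
    rcases eq_or_lt_of_le (norm_nonneg β) with h0 | h0
    · rw [← h0]; positivity
    · nlinarith [hmain, hCS, mul_le_mul_of_nonneg_left hCS (by linarith : (0:ℝ) ≤ (3/2)*lam)]
  refine ⟨hb1, ?_⟩
  -- second conclusion
  have hgoal : (∑ i, |θhat i - θ0 i|) = S1U + S1c := by
    simp_rw [← hβi]; exact hsum_split
  rw [hgoal]
  rcases eq_or_lt_of_le hlam0 with h0 | h0
  · -- λ = 0 forces β = 0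
    have hm' : 2 * ‖β‖ ^ 2 ≤ 0 := by rw [← h0] at hmain; linarith
    have hsq0 : ‖β‖ ^ 2 = 0 := le_antisymm (by linarith) (sq_nonneg _)
    have hsum0 : ∑ i, β i ^ 2 = 0 := by rw [← hnormsq]; exact hsq0
    have hz : ∀ i ∈ Finset.univ, β i ^ 2 = 0 :=
      (Finset.sum_eq_zero_iff_of_nonneg fun i _ => sq_nonneg _).mp hsum0
    have hz' : ∀ i : Fin d, β i = 0 := fun i =>
      pow_eq_zero_iff (n := 2) (by norm_num) |>.mp (hz i (Finset.mem_univ i))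
    have h1 : S1U = 0 := Finset.sum_eq_zero fun i _ => by rw [hz' i, abs_zero]
    have h2 : S1c = 0 := Finset.sum_eq_zero fun i _ => by rw [hz' i, abs_zero]
    rw [h1, h2, ← h0]
    simp
  · -- λ > 0
    have hS1c3 : S1c ≤ 3 * S1U := by
      have h := hmain
      have h2 : (lam / 2) * S1c ≤ (3 / 2) * lam * S1U := by nlinarith [sq_nonneg ‖β‖]
      have := (mul_le_mul_iff_right₀ (by linarith : (0:ℝ) < lam / 2)).mp (by linarith : (lam/2) * S1c ≤ (lam/2) * (3 * S1U))
      linarith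
    have hchain : S1U + S1c ≤ 4 * S1U := by linarith
    have h4 : 4 * S1U ≤ 4 * (Real.sqrt s * ‖β‖) := by linarith [hCS]
    have h5 : Real.sqrt s * ‖β‖ ≤ Real.sqrt s * (3 / 4 * lam * Real.sqrt s) :=
      mul_le_mul_of_nonneg_left hb1 hsqrt0
    have h6 : Real.sqrt s * (3 / 4 * lam * Real.sqrt s) = 3 / 4 * lam * (s : ℝ) := by
      rw [show Real.sqrt s * (3 / 4 * lam * Real.sqrt s)
        = 3 / 4 * lam * (Real.sqrt s * Real.sqrt s) by ring, hsq]
    nlinarith [h4, h5, h6, hchain]
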